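/- arXiv:math/0101260 — 2 statements merged into one kernel-verified Lean document; each statement's English description precedes it below -/
import Mathlib

section
/- Let 0 → A →^{d₀} B →^{d₁} C → 0 be a short exact sequence of finite-dimensional vector spaces with chosen bases of sizes p, q, r (so p + r = q). Let D₀, D₁ be the matrices of d₀, d₁. Let D̄₁ be the submatrix of D₁ consisting of all r rows and the first r columns, and D̄₀ the submatrix of D₀ consisting of the last p rows and all p columns. Then det(D̄₀) ≠ 0 if and only if det(D̄₁) ≠ 0. -/
/-!
Write `π` for restriction of `k^q` to the last `p` coordinates and `ι` for extension by zero from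
the first `r` coordinates, so that `0 → k^r → k^q → k^p` is exact. The two minors are the matrices
of `π ∘ d₀` and `d₁ ∘ ι`. If `π (d₀ u) = 0` then `d₀ u = ι x` with `d₁ (ι x) = 0`, and conversely if
`d₁ (ι x) = 0` then `ι x = d₀ u` with `π (d₀ u) = 0`; injectivity of `d₀` and `ι` makes this a
correspondence between nonzero kernel vectors, so one minor is singular exactly when the other is.
-/

open Function

namespace LinearMap

variable {R U V W X Y : Type*} [Ring R] [AddCommGroup U] [AddCommGroup V] [AddCommGroup W]
  [AddCommGroup X] [AddCommGroup Y] [Module R U] [Module R V] [Module R W] [Module R X]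
  [Module R Y] {f : U →ₗ[R] V} {g : V →ₗ[R] W} {ι : X →ₗ[R] V} {π : V →ₗ[R] Y}

theorem injective_comp_of_exact (hf : Injective f) (hgf : g ∘ₗ f = 0) (hιπ : Exact ι π)
    (h : Injective (g ∘ₗ ι)) : Injective (π ∘ₗ f) := by
  refine (injective_iff_map_eq_zero _).2 fun u hu => ?_
  obtain ⟨x, hx⟩ := (hιπ (f u)).1 hu
  have hx0 : x = 0 := (injective_iff_map_eq_zero _).1 h x <| by
    simpa [hx] using congr($hgf u)
  exact hf (by rw [← hx, hx0, map_zero, map_zero])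

theorem injective_comp_iff_of_exact (hf : Injective f) (hι : Injective ι) (hfg : Exact f g)
    (hιπ : Exact ι π) : Injective (π ∘ₗ f) ↔ Injective (g ∘ₗ ι) :=
  ⟨injective_comp_of_exact hι hιπ.linearMap_comp_eq_zero hfg,
    injective_comp_of_exact hf hfg.linearMap_comp_eq_zero hιπ⟩

end LinearMap

section

variable {R l m n : Type*} [CommSemiring R]

theorem exact_extendByZero_funLeft (e : l ⊕ n ≃ m) :
    Exact (ExtendByZero.linearMap R (e ∘ Sum.inl)) (LinearMap.funLeft R R (e ∘ Sum.inr)) := by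
  have hinl : Injective (e ∘ Sum.inl) := e.injective.comp Sum.inl_injective
  have hdisj : ∀ b, ¬∃ a, (e ∘ Sum.inl) a = e (Sum.inr b) := by simp
  intro y
  constructor
  · intro hy
    refine ⟨y ∘ e ∘ Sum.inl, funext fun x => ?_⟩
    obtain ⟨a | b, rfl⟩ := e.surjective x
    · exact hinl.extend_apply _ _ a
    · simpa [extend_apply' _ _ _ (hdisj b)] using (congr_fun hy b).symm
  · rintro ⟨v, rfl⟩
    funext b
    exact extend_apply' _ _ _ (hdisj b)

namespace Matrix

theorem submatrix_cols_mulVec_of_injective [Fintype m] [Fintype n] (M : Matrix l m R)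
    {j : n → m} (hj : Injective j) (v : n → R) : M.submatrix id j *ᵥ v = M *ᵥ extend j v 0 := by
  funext i
  refine Fintype.sum_of_injective j hj _ _ (fun x hx => ?_) (fun a => ?_)
  · simp [extend_apply' _ _ _ (by simpa using hx)]
  · simp [hj.extend_apply]

theorem mulVecLin_submatrix_cols_of_injective [Fintype m] [Fintype n] (M : Matrix l m R)
    {j : n → m} (hj : Injective j) :
    (M.submatrix id j).mulVecLin = M.mulVecLin ∘ₗ ExtendByZero.linearMap R j :=
  LinearMap.ext (submatrix_cols_mulVec_of_injective M hj)

theorem mulVecLin_submatrix_rows [Fintype n] (M : Matrix m n R) (j : l → m) :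
    (M.submatrix j id).mulVecLin = LinearMap.funLeft R R j ∘ₗ M.mulVecLin :=
  rfl

theorem det_ne_zero_iff_injective_mulVecLin {K : Type*} [Field K] [Fintype n] [DecidableEq n]
    (M : Matrix n n K) :
    M.det ≠ 0 ↔ Injective M.mulVecLin :=
  (isUnit_iff_ne_zero.symm.trans (isUnit_iff_isUnit_det M).symm).trans
    mulVec_injective_iff_isUnit.symm

end Matrix

end

/-- For a short exact sequence `0 → A → B → C → 0` (here realized by matrices
`D₀ : k^p → k^q` and `D₁ : k^q → k^r` with `q = p + r`), the minor of `D₁` on the first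
`r` columns is nonzero iff the minor of `D₀` on the last `p` rows is nonzero. -/
theorem exact_complex_minors {k : Type*} [Field k] (p q r : ℕ) (hq : q = p + r)
    (D₀ : Matrix (Fin q) (Fin p) k) (D₁ : Matrix (Fin r) (Fin q) k)
    (hinj : Function.Injective D₀.mulVecLin)
    (hexact : LinearMap.range D₀.mulVecLin = LinearMap.ker D₁.mulVecLin) :
    (D₀.submatrix (fun i : Fin p => Fin.cast (by omega) (Fin.natAdd r i)) id).det ≠ 0 ↔
      (D₁.submatrix id (fun j : Fin r => Fin.castLE (by omega) j)).det ≠ 0 := by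
  let e : Fin r ⊕ Fin p ≃ Fin q := finSumFinEquiv.trans (finCongr (by omega))
  have hinl : Injective (e ∘ Sum.inl) := e.injective.comp Sum.inl_injective
  rw [Matrix.det_ne_zero_iff_injective_mulVecLin, Matrix.det_ne_zero_iff_injective_mulVecLin,
    show (fun i : Fin p => Fin.cast (by omega) (Fin.natAdd r i)) = e ∘ Sum.inr from rfl,
    show (fun j : Fin r => Fin.castLE (by omega) j) = e ∘ Sum.inl from rfl,
    Matrix.mulVecLin_submatrix_rows, Matrix.mulVecLin_submatrix_cols_of_injective _ hinl]
  exact LinearMap.injective_comp_iff_of_exact hinj (extend_injective hinl 0)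
    (LinearMap.exact_iff.2 hexact.symm) (exact_extendByZero_funLeft e)
end

section
/- Let 0 → A →^{d₀} B →^{d₁} C → 0 be a short exact sequence of finite-dimensional vector spaces with bases of sizes p, q, r (p + r = q), matrices D₀ (q×p) and D₁ (r×q). For an ordered subset I = {i₁ < ... < i_r} ⊆ {1,...,q}, let D̄_{0,I} be the p×p submatrix of D₀ of rows indexed by the complement of I, and D̄_{1,I} the r×r submatrix of D₁ of columns indexed by I. Then det(D̄_{0,I}) ≠ 0 if and only if det(D̄_{1,I}) ≠ 0, and the ratio det(D̄_{1,I})/det(D̄_{0,I}) is, up to the sign of an explicit permutation, independent of the choice of I (it equals the determinant of the complex). -/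
/-!
Choose a left inverse `G` of `D₀` and stack it on top of `D₁` to get a square matrix `T`
(after identifying `Fin p ⊕ Fin r` with `Fin q`). For any `X`, exactness gives
`T * [D₀ | X] = [[1, G X], [0, D₁ X]]`, so `det (D₁ X) = det T * det [D₀ | X]`. Taking for `X`
a right inverse of `D₁` shows `det T ≠ 0`; taking for `X` the unit columns indexed by `I`
makes `D₁ X` the minor of `D₁` on the columns `I`, while `[D₀ | X]`, with its rows reordered
as `Iᶜ` then `I`, is block lower triangular with diagonal blocks the minor of `D₀` on the rows
`Iᶜ` and `1`. Hence `lam = det T` works, the sign coming from the row reordering.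
-/

open Matrix

theorem Finset.orderEmbOfFin_compl_ne_orderEmbOfFin {α : Type*} [Fintype α] [LinearOrder α]
    {p r : ℕ} (s : Finset α) (hs : s.card = r) (hsc : sᶜ.card = p) (i : Fin p) (j : Fin r) :
    sᶜ.orderEmbOfFin hsc i ≠ s.orderEmbOfFin hs j := fun h =>
  Finset.mem_compl.mp (h ▸ sᶜ.orderEmbOfFin_mem hsc i) (s.orderEmbOfFin_mem hs j)

theorem Finset.bijective_sumElim_orderEmbOfFin {α : Type*} [Fintype α] [LinearOrder α]
    {p r : ℕ} (s : Finset α) (hs : s.card = r) (hsc : sᶜ.card = p) :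
    Function.Bijective (Sum.elim (sᶜ.orderEmbOfFin hsc) (s.orderEmbOfFin hs)) := by
  rw [Fintype.bijective_iff_injective_and_card]
  refine ⟨(sᶜ.orderEmbOfFin hsc).injective.sumElim (s.orderEmbOfFin hs).injective
    (s.orderEmbOfFin_compl_ne_orderEmbOfFin hs hsc), ?_⟩
  rw [Fintype.card_sum, Fintype.card_fin, Fintype.card_fin, ← hs, ← hsc,
    Finset.card_compl_add_card]

namespace Matrix

variable {m n l : Type*}

section Field

variable {k : Type*} [Field k] [Fintype m] [Fintype n]

theorem exists_mul_eq_one_of_injective_mulVecLin [DecidableEq m] {A : Matrix n m k}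
    (hA : Function.Injective A.mulVecLin) : ∃ G : Matrix m n k, G * A = 1 := by
  classical
  obtain ⟨g, hg⟩ := A.mulVecLin.exists_leftInverse_of_injective (LinearMap.ker_eq_bot.mpr hA)
  refine ⟨LinearMap.toMatrix' g, ?_⟩
  rw [← LinearMap.toMatrix'_toLin' A, ← LinearMap.toMatrix'_comp, Matrix.toLin'_apply', hg,
    LinearMap.toMatrix'_id]

theorem mul_eq_zero_of_range_le_ker {A : Matrix l n k} {B : Matrix n m k}
    (h : LinearMap.range B.mulVecLin ≤ LinearMap.ker A.mulVecLin) : A * B = 0 := by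
  classical
  rw [LinearMap.range_le_ker_iff, ← Matrix.mulVecLin_mul, ← Matrix.toLin'_apply'] at h
  exact Matrix.toLin'.injective (h.trans (map_zero _).symm)

end Field

section CommRing

variable {R : Type*} [CommRing R] [Fintype m] [Fintype l] [DecidableEq m] [DecidableEq l]

theorem det_mul_eq_det_fromRows_mul_det_fromCols [Fintype n] {G : Matrix m n R}
    {D₀ : Matrix n m R} {D₁ : Matrix l n R} (hG : G * D₀ = 1) (hD : D₁ * D₀ = 0)
    (e : m ⊕ l ≃ n) (X : Matrix n l R) :
    (D₁ * X).det =
      ((fromRows G D₁).submatrix id e).det * ((fromCols D₀ X).submatrix e id).det := by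
  rw [← det_mul, submatrix_mul_equiv, submatrix_id_id, fromRows_mul_fromCols, hG, hD,
    det_fromBlocks_zero₂₁, det_one, one_mul]

theorem det_submatrix_fromCols_one_submatrix [DecidableEq n] (A : Matrix n m R) {f : m → n}
    {g : l → n} (hg : Function.Injective g) (hfg : ∀ i j, f i ≠ g j) :
    ((fromCols A ((1 : Matrix n n R).submatrix id g)).submatrix (Sum.elim f g) id).det =
      (A.submatrix f id).det := by
  have hblocks : (fromCols A ((1 : Matrix n n R).submatrix id g)).submatrix (Sum.elim f g) id =
      fromBlocks (A.submatrix f id) 0 (A.submatrix g id) 1 := by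
    rw [← submatrix_one g hg]
    ext (i | i) (j | j) <;> simp [one_apply, hfg]
  rw [hblocks, det_fromBlocks_zero₁₂, det_one, mul_one]

end CommRing

theorem det_submatrix_equiv_eq_or_eq_neg {o R : Type*} [Fintype o] [DecidableEq o]
    [CommRing R] (M : Matrix n o R) (e e' : o ≃ n) :
    (M.submatrix e' id).det = (M.submatrix e id).det ∨
      (M.submatrix e' id).det = -(M.submatrix e id).det := by
  have hperm : M.submatrix e' id = (M.submatrix e id).submatrix (e'.trans e.symm) id := by
    simp [submatrix_submatrix, Function.comp_def]
  rw [hperm, det_permute]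
  rcases Int.units_eq_one_or (Equiv.Perm.sign (e'.trans e.symm)) with h | h <;> simp [h]

end Matrix

/-- For a short exact sequence `0 → A → B → C → 0` realized by matrices `D₀, D₁` with
`q = p + r`: for every subset `I ⊆ {1,…,q}` of cardinality `r`, the maximal minor of `D₀`
on the rows in the complement of `I` is nonzero iff the maximal minor of `D₁` on the
columns in `I` is nonzero, and up to sign their ratio is a scalar `lam` (the determinant
of the complex) independent of `I`. -/
theorem exact_complex_determinant {k : Type*} [Field k] (p q r : ℕ) (hq : q = p + r)
    (D₀ : Matrix (Fin q) (Fin p) k) (D₁ : Matrix (Fin r) (Fin q) k)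
    (hinj : Function.Injective D₀.mulVecLin)
    (hsurj : Function.Surjective D₁.mulVecLin)
    (hexact : LinearMap.range D₀.mulVecLin = LinearMap.ker D₁.mulVecLin) :
    ∃ lam : k, ∀ (I : Finset (Fin q)) (hI : I.card = r) (hIc : Iᶜ.card = p),
      ((D₀.submatrix (Iᶜ.orderEmbOfFin hIc) id).det ≠ 0 ↔
        (D₁.submatrix id (I.orderEmbOfFin hI)).det ≠ 0) ∧
      ((D₁.submatrix id (I.orderEmbOfFin hI)).det
          = lam * (D₀.submatrix (Iᶜ.orderEmbOfFin hIc) id).det ∨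
        (D₁.submatrix id (I.orderEmbOfFin hI)).det
          = -(lam * (D₀.submatrix (Iᶜ.orderEmbOfFin hIc) id).det)) := by
  obtain ⟨G, hG⟩ := exists_mul_eq_one_of_injective_mulVecLin hinj
  obtain ⟨S, hS⟩ := mulVec_surjective_iff_exists_right_inverse.mp hsurj
  let e : Fin p ⊕ Fin r ≃ Fin q := finSumFinEquiv.trans (finCongr hq.symm)
  have key := det_mul_eq_det_fromRows_mul_det_fromCols hG
    (mul_eq_zero_of_range_le_ker hexact.le) e
  set lam := ((fromRows G D₁).submatrix id e).det
  have hlam : lam ≠ 0 := left_ne_zero_of_mul_eq_one (by rw [← key, hS, det_one])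
  refine ⟨lam, fun I hI hIc => ?_⟩
  set g := I.orderEmbOfFin hI
  set X := (1 : Matrix (Fin q) (Fin q) k).submatrix id g
  have hminor : (D₁.submatrix id g).det = lam * ((fromCols D₀ X).submatrix e id).det := by
    rw [← key]
    exact congrArg det (mul_submatrix_one (Equiv.refl _) g D₁).symm
  have hsign := det_submatrix_equiv_eq_or_eq_neg (fromCols D₀ X)
    (Equiv.ofBijective _ (I.bijective_sumElim_orderEmbOfFin hI hIc)) e
  rw [Equiv.coe_ofBijective, det_submatrix_fromCols_one_submatrix D₀ g.injective
    (I.orderEmbOfFin_compl_ne_orderEmbOfFin hI hIc)] at hsign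
  rw [hminor]
  rcases hsign with h | h <;> rw [h] <;> simp [hlam]
end
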